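/- Let P be a tame power series and suppose there exists an isolated point a of Ω(P) which is periodic under the shift map τ_Ω. Then Ω(P) is finite, τ_Ω acts on Ω(P) as an invertible transitive (cyclic) permutation, and setting h := #Ω(P), for each residue class e mod h the subsequence (X_n(P))_{n ≡ e (mod h)} converges to a single element a^{[e]} ∈ Ω(P); the map e mod h ↦ a^{[e]} is a bijection ℤ/hℤ → Ω(P) intertwining the shift e ↦ e−1 with τ_Ω. -/

import Mathlib

/-! The opposite polynomials satisfy `τ_Ω X_{n+1} = X_n`, and tameness keeps their `k`-th
coefficients in a fixed compact disc, so it suffices to study a sequence `x` with cluster set `Ω`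
and a map `T`, continuous on `Ω`, such that `T (x (n + 1)) = x n`.

Let `q` be the minimal period of the isolated point `a`, and `W` a small closed neighbourhood
of `a`. For large `n`, `x (n + q) ∈ W` forces `x n ∈ W`: otherwise the offending `x (n + q)`
cluster at a point of `W ∩ Ω = {a}`, so by continuity of `T^[q]` the `x n` cluster at
`T^[q] a = a` while avoiding `W`. As `x` visits `W` infinitely often along some residue class
mod `q`, it then stays in `W` along that whole class. Hence `x` converges to `a` along one
residue class, to `T^[i] a` along the class `i` steps below it, and `Ω` is the orbit of `a`. -/

open Filter

/-- Tameness of a coefficient sequence: `γ n ≠ 0` and `u ≤ |γ (n-1) / γ n| ≤ v`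
    for all `n ≥ N`. -/
def Tame (γ : ℕ → ℂ) (u v : ℝ) (N : ℕ) : Prop :=
  0 < u ∧ 0 < v ∧ (∀ n ≥ N, γ n ≠ 0) ∧
    ∀ n ≥ N + 1, u ≤ ‖γ (n - 1) / γ n‖ ∧ ‖γ (n - 1) / γ n‖ ≤ v

/-- The opposite polynomial `X_n(P) = ∑_{k=0}^n (γ_{n-k}/γ_n) s^k`, viewed as its
    coefficient sequence in `ℂ[[s]] ≅ (ℕ → ℂ)` with the product topology. -/
noncomputable def oppPoly (γ : ℕ → ℂ) (n : ℕ) : ℕ → ℂ :=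
  fun k => if k ≤ n then γ (n - k) / γ n else 0

/-- The space `Ω(P)` of opposite series: the set of cluster points of the sequence
    of opposite polynomials in the coefficientwise (product) topology. -/
def OmegaP (γ : ℕ → ℂ) : Set (ℕ → ℂ) :=
  {a | MapClusterPt a atTop (oppPoly γ)}


/-- The shift map `τ_Ω` on opposite series: `(τ_Ω a)_k = a_{k+1} / a_1`. -/
noncomputable def tauFun (a : ℕ → ℂ) : ℕ → ℂ := fun k => a (k + 1) / a 1

open Function Set Topology

section OrbitZMod

variable {α : Type*} (f : α → α) (x : α)

noncomputable def orbitZMod (e : ZMod (minimalPeriod f x)) : α := f^[e.val] x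

theorem orbitZMod_natCast (n : ℕ) : orbitZMod f x n = f^[n] x := by
  rw [orbitZMod, ZMod.val_natCast, iterate_mod_minimalPeriod_eq]

variable [NeZero (minimalPeriod f x)]

theorem orbitZMod_add_one (e : ZMod (minimalPeriod f x)) :
    orbitZMod f x (e + 1) = f (orbitZMod f x e) := by
  rw [← ZMod.natCast_zmod_val e, ← Nat.cast_succ, orbitZMod_natCast, orbitZMod_natCast,
    iterate_succ_apply']

theorem orbitZMod_injective : Injective (orbitZMod f x) := fun _ _ h =>
  ZMod.val_injective _ (iterate_injOn_Iio_minimalPeriod (ZMod.val_lt _) (ZMod.val_lt _) h)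

end OrbitZMod

theorem Nat.tendsto_add_mul_atTop {p : ℕ} (hp : 0 < p) (r : ℕ) :
    Tendsto (fun m => r + p * m) atTop atTop :=
  tendsto_atTop_mono (fun m => (Nat.le_mul_of_pos_left m hp).trans (Nat.le_add_left _ r))
    tendsto_id

theorem Nat.atTop_eq_iSup_residue (p : ℕ) [NeZero p] :
    (atTop : Filter ℕ) = ⨆ e : ZMod p, map (fun m => e.val + p * m) atTop := by
  refine le_antisymm (fun s hs => ?_)
    (iSup_le fun e => Nat.tendsto_add_mul_atTop (NeZero.pos p) e.val)
  obtain ⟨M, hM⟩ := eventually_atTop.1 (eventually_all.2 (mem_iSup.1 hs))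
  refine mem_atTop_sets.2 ⟨p * M, fun n hn => ?_⟩
  have hres : ((n : ZMod p)).val + p * (n / p) = n := by
    rw [ZMod.val_natCast, Nat.mod_add_div]
  rw [← hres]
  exact hM (n / p) ((Nat.le_div_iff_mul_le (NeZero.pos p)).2 (by rwa [mul_comm])) _

theorem Nat.eventually_of_frequently_of_eventually_succ_imp {P : ℕ → Prop}
    (hP : ∃ᶠ m in atTop, P m) (hdown : ∀ᶠ m in atTop, P (m + 1) → P m) :
    ∀ᶠ m in atTop, P m := by
  obtain ⟨m₀, hm₀⟩ := eventually_atTop.1 hdown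
  refine eventually_atTop.2 ⟨m₀, fun m hm => ?_⟩
  obtain ⟨m', hmm', hm'⟩ := frequently_atTop.1 hP m
  exact Nat.decreasingInduction' (fun k _ hmk hk => hm₀ k (hm.trans hmk) hk) hmm' hm'

theorem exists_tendsto_of_forall_eventually_mem {ι α X : Type*} [TopologicalSpace X] [Finite ι]
    {l : Filter α} {f : ι → α → X} {a : X}
    (h : ∀ U ∈ 𝓝 a, ∃ i, ∀ᶠ t in l, f i t ∈ U) : ∃ i, Tendsto (f i) l (𝓝 a) := by
  by_contra! hnot
  choose U hU hfreq using fun i => not_tendsto_iff_exists_frequently_notMem.1 (hnot i)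
  obtain ⟨i, hi⟩ := h (⋂ i, U i) (iInter_mem.2 hU)
  exact hfreq i (hi.mono fun t ht hU => hU (mem_iInter.1 ht i))

theorem exists_mapClusterPt_of_iSup {ι α X : Type*} [TopologicalSpace X] [Finite ι]
    {F : ι → Filter α} {u : α → X} {c : X} (h : MapClusterPt c (⨆ i, F i) u) :
    ∃ i, MapClusterPt c (F i) u := by
  by_contra! hnot
  simp only [mapClusterPt_iff_frequently, not_forall, not_frequently] at hnot
  choose U hU hev using hnot
  exact (mapClusterPt_iff_frequently.1 h _ (iInter_mem.2 hU))
    (eventually_iSup.2 fun i => (hev i).mono fun t ht hmem => ht (mem_iInter.1 hmem i))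

section BackShift

variable {X : Type*} [TopologicalSpace X]

def clusterPts (x : ℕ → X) : Set X := {c | MapClusterPt c atTop x}

structure IsBackShift (T : X → X) (x : ℕ → X) : Prop where
  exists_mapClusterPt : ∀ (F : Filter ℕ) [F.NeBot], F ≤ atTop → ∃ c, MapClusterPt c F x
  eventually_apply_succ : ∀ᶠ n in atTop, T (x (n + 1)) = x n
  continuousAt : ∀ c ∈ clusterPts x, ContinuousAt T c

namespace IsBackShift

variable {T : X → X} {x : ℕ → X}

theorem mapsTo (hT : IsBackShift T x) : MapsTo T (clusterPts x) (clusterPts x) := by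
  intro c hc
  have hcomp : MapClusterPt (T c) atTop ((T ∘ x) ∘ (· + 1)) := by
    rw [mapClusterPt_comp, map_add_atTop_eq_nat]
    exact hc.continuousAt_comp (hT.continuousAt c hc)
  exact (EventuallyEq.mapClusterPt_iff hT.eventually_apply_succ).1 hcomp

theorem eventually_iterate_apply_add (hT : IsBackShift T x) (i : ℕ) :
    ∀ᶠ n in atTop, T^[i] (x (n + i)) = x n := by
  induction i with
  | zero => simp
  | succ i ih =>
    filter_upwards [ih, (tendsto_add_atTop_nat i).eventually hT.eventually_apply_succ]
      with n hn hs
    rw [iterate_succ_apply, ← add_assoc, hs, hn]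

theorem continuousAt_iterate (hT : IsBackShift T x) {c : X} (hc : c ∈ clusterPts x) (i : ℕ) :
    ContinuousAt T^[i] c := by
  induction i generalizing c with
  | zero => exact continuousAt_id
  | succ i ih => exact (ih (hT.mapsTo hc)).comp (hT.continuousAt c hc)

theorem tendsto_iterate (hT : IsBackShift T x) {c : X} (hc : c ∈ clusterPts x) {n i p : ℕ}
    (hp : 0 < p) (h : Tendsto (fun m => x (n + i + p * m)) atTop (𝓝 c)) :
    Tendsto (fun m => x (n + p * m)) atTop (𝓝 (T^[i] c)) := by
  refine ((hT.continuousAt_iterate hc i).tendsto.comp h).congr' ?_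
  filter_upwards [(Nat.tendsto_add_mul_atTop hp n).eventually
    (hT.eventually_iterate_apply_add i)] with m hm
  rw [comp_apply, add_right_comm n i, hm]

variable {a : X} {V : Set X} {p : ℕ}

theorem exists_mem_nhds_eventually_mem_of_mem_add [RegularSpace X] (hT : IsBackShift T x)
    (hV : V ∈ 𝓝 a) (hiso : clusterPts x ∩ V ⊆ {a}) (hpa : T^[p] a = a) {U : Set X} (hU : U ∈ 𝓝 a) :
    ∃ W ∈ 𝓝 a, W ⊆ U ∧ ∀ᶠ n in atTop, x (n + p) ∈ W → x n ∈ W := by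
  obtain ⟨W, hW, hWc, hWUV⟩ := exists_mem_nhds_isClosed_subset (inter_mem hU hV)
  refine ⟨W, hW, fun y hy => (hWUV hy).1, ?_⟩
  by_contra hfreq
  simp only [not_eventually, Classical.not_imp] at hfreq
  set F := atTop ⊓ 𝓟 {n | x (n + p) ∈ W ∧ x n ∉ W}
  have : F.NeBot := frequently_iff_neBot.1 hfreq
  have hF : ∀ᶠ n in F, x (n + p) ∈ W ∧ x n ∉ W := mem_inf_of_right (mem_principal_self _)
  have hFtop : Tendsto (· + p) F atTop := (tendsto_add_atTop_nat p).mono_left inf_le_left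
  obtain ⟨c, hc⟩ := hT.exists_mapClusterPt _ hFtop
  have hcW : c ∈ W :=
    hWc.closure_subset <| hc.clusterPt.mem_closure_of_mem W <| hF.mono fun _ hn => hn.1
  obtain rfl : c = a := hiso ⟨hc.mono hFtop, (hWUV hcW).2⟩
  have hcF : MapClusterPt (T^[p] c) F x :=
    (EventuallyEq.mapClusterPt_iff (hT.eventually_iterate_apply_add p |>.filter_mono
      inf_le_left)).1 (hc.continuousAt_comp (hT.continuousAt_iterate (hc.mono hFtop) p))
  rw [hpa] at hcF
  exact hcF.frequently hW (hF.mono fun _ hn => hn.2)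

theorem exists_tendsto_residue [RegularSpace X] (hT : IsBackShift T x) (ha : a ∈ clusterPts x)
    (hV : V ∈ 𝓝 a) (hiso : clusterPts x ∩ V ⊆ {a}) [NeZero p] (hpa : T^[p] a = a) :
    ∃ r : ZMod p, Tendsto (fun m => x (r.val + p * m)) atTop (𝓝 a) := by
  refine exists_tendsto_of_forall_eventually_mem fun U hU => ?_
  obtain ⟨W, hW, hWU, hret⟩ := hT.exists_mem_nhds_eventually_mem_of_mem_add hV hiso hpa hU
  have hfreq : ∃ᶠ n in atTop, x n ∈ W := mapClusterPt_iff_frequently.1 ha W hW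
  rw [Nat.atTop_eq_iSup_residue p, frequently_iSup] at hfreq
  obtain ⟨r, hr⟩ := hfreq
  refine ⟨r, (Nat.eventually_of_frequently_of_eventually_succ_imp hr ?_).mono fun _ hm => hWU hm⟩
  filter_upwards [(Nat.tendsto_add_mul_atTop (NeZero.pos p) r.val).eventually hret] with m hm
  rwa [mul_add_one, ← add_assoc]

variable [NeZero (minimalPeriod T a)] {r : ZMod (minimalPeriod T a)}

theorem tendsto_orbitZMod (hT : IsBackShift T x) (ha : a ∈ clusterPts x)
    (hr : Tendsto (fun m => x (r.val + minimalPeriod T a * m)) atTop (𝓝 a))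
    (e : ZMod (minimalPeriod T a)) :
    Tendsto (fun m => x (e.val + minimalPeriod T a * m)) atTop (𝓝 (orbitZMod T a (r - e))) := by
  have hq := NeZero.pos (minimalPeriod T a)
  have hle : e.val ≤ minimalPeriod T a * e.val := Nat.le_mul_of_pos_left _ hq
  have hshift : Tendsto (fun m => x (e.val + (r.val + minimalPeriod T a * e.val - e.val) +
      minimalPeriod T a * m)) atTop (𝓝 a) := by
    refine ((tendsto_add_atTop_iff_nat e.val).2 hr).congr fun m => ?_
    rw [mul_add]
    congr 1
    omega
  convert hT.tendsto_iterate ha hq hshift using 2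
  rw [← orbitZMod_natCast, Nat.cast_sub (hle.trans (Nat.le_add_left _ _))]
  push_cast
  rw [ZMod.natCast_self, ZMod.natCast_zmod_val, ZMod.natCast_zmod_val, zero_mul, add_zero]

theorem clusterPts_eq_range_orbitZMod [T2Space X] (hT : IsBackShift T x)
    (ha : a ∈ clusterPts x)
    (hr : Tendsto (fun m => x (r.val + minimalPeriod T a * m)) atTop (𝓝 a)) :
    clusterPts x = range (orbitZMod T a) := by
  refine Subset.antisymm (fun c hc => ?_) ?_
  · have hc' : MapClusterPt c atTop x := hc
    rw [Nat.atTop_eq_iSup_residue (minimalPeriod T a)] at hc'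
    obtain ⟨e, he⟩ := exists_mapClusterPt_of_iSup hc'
    have he' : MapClusterPt c atTop (fun m => x (e.val + minimalPeriod T a * m)) :=
      mapClusterPt_comp.2 he
    exact ⟨r - e, (eq_of_nhds_neBot <| he'.neBot.mono <|
      inf_le_inf_left _ (hT.tendsto_orbitZMod ha hr e)).symm⟩
  · rintro _ ⟨e, rfl⟩
    exact hT.mapsTo.iterate e.val ha

end IsBackShift

end BackShift

theorem oppPoly_one {γ : ℕ → ℂ} {n : ℕ} (hn : 1 ≤ n) : oppPoly γ n 1 = γ (n - 1) / γ n :=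
  if_pos hn

theorem continuousAt_tauFun {c : ℕ → ℂ} (hc : c 1 ≠ 0) : ContinuousAt tauFun c :=
  continuousAt_pi.2 fun k =>
    ((continuous_apply (k + 1)).continuousAt).div (continuous_apply 1).continuousAt hc

namespace Tame

variable {γ : ℕ → ℂ} {u v : ℝ} {N n : ℕ}

theorem ne_zero (hT : Tame γ u v N) (hn : N ≤ n) : γ n ≠ 0 := hT.2.2.1 n hn

theorem le_norm_oppPoly_one (hT : Tame γ u v N) (hn : N + 1 ≤ n) : u ≤ ‖oppPoly γ n 1‖ := by
  simpa [oppPoly_one (by omega : 1 ≤ n)] using (hT.2.2.2 n hn).1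

theorem norm_oppPoly_one_le (hT : Tame γ u v N) (hn : N + 1 ≤ n) : ‖oppPoly γ n 1‖ ≤ v := by
  simpa [oppPoly_one (by omega : 1 ≤ n)] using (hT.2.2.2 n hn).2

theorem tauFun_oppPoly_succ (hT : Tame γ u v N) (hn : N ≤ n) :
    tauFun (oppPoly γ (n + 1)) = oppPoly γ n := by
  have h₀ := hT.ne_zero hn
  have h₁ := hT.ne_zero (Nat.le_succ_of_le hn)
  funext k
  simp only [tauFun, oppPoly, Nat.add_sub_add_right, Nat.add_sub_cancel, add_le_add_iff_right,
    le_add_iff_nonneg_left, zero_le, if_true]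
  split_ifs
  · field_simp
  · simp

theorem norm_oppPoly_le (hT : Tame γ u v N) {k : ℕ} (hn : N + k ≤ n) :
    ‖oppPoly γ n k‖ ≤ v ^ k := by
  induction k generalizing n with
  | zero => simp [oppPoly, div_self (hT.ne_zero (by omega : N ≤ n))]
  | succ k ih =>
    obtain ⟨m, rfl⟩ : ∃ m, n = m + 1 := ⟨n - 1, by omega⟩
    have hne : oppPoly γ (m + 1) 1 ≠ 0 := by
      rw [oppPoly_one (by omega)]
      exact div_ne_zero (hT.ne_zero (by omega)) (hT.ne_zero (by omega))
    have hsplit : oppPoly γ (m + 1) (k + 1) = oppPoly γ (m + 1) 1 * oppPoly γ m k := by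
      rw [← hT.tauFun_oppPoly_succ (by omega : N ≤ m), tauFun, mul_div_cancel₀ _ hne]
    rw [hsplit, norm_mul, pow_succ']
    exact mul_le_mul (hT.norm_oppPoly_one_le (by omega)) (ih (by omega)) (norm_nonneg _) hT.2.1.le

theorem exists_mapClusterPt_oppPoly (hT : Tame γ u v N) (F : Filter ℕ) [F.NeBot]
    (hF : F ≤ atTop) : ∃ c, MapClusterPt c F (oppPoly γ) := by
  set 𝒰 := Ultrafilter.of F
  have hcoord : ∀ k, ∃ z, Tendsto (fun n => oppPoly γ n k) 𝒰 (𝓝 z) := fun k => by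
    obtain ⟨z, -, hz⟩ := (isCompact_closedBall (0 : ℂ) (v ^ k)).ultrafilter_le_nhds
      (𝒰.map fun n => oppPoly γ n k) <| le_principal_iff.2 <|
        (Ultrafilter.of_le F).trans hF <| (eventually_ge_atTop (N + k)).mono fun n hn => by
          simpa using hT.norm_oppPoly_le hn
    exact ⟨z, hz⟩
  choose c hc using hcoord
  exact ⟨c, mapClusterPt_iff_ultrafilter.2 ⟨𝒰, Ultrafilter.of_le F, tendsto_pi_nhds.2 hc⟩⟩

theorem apply_one_ne_zero_of_mem_OmegaP (hT : Tame γ u v N) {c : ℕ → ℂ} (hc : c ∈ OmegaP γ) :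
    c 1 ≠ 0 := by
  have hmem : {z : ℂ | u ≤ ‖z‖} ∈ map (fun n => oppPoly γ n 1) atTop :=
    (eventually_ge_atTop (N + 1)).mono fun _ hn => hT.le_norm_oppPoly_one hn
  have hu : u ≤ ‖c 1‖ := (isClosed_le continuous_const continuous_norm).closure_subset <|
    (hc.continuousAt_comp (continuous_apply 1).continuousAt).clusterPt.mem_closure_of_mem _ hmem
  exact norm_pos_iff.1 (hT.1.trans_le hu)

theorem isBackShift (hT : Tame γ u v N) : IsBackShift tauFun (oppPoly γ) where
  exists_mapClusterPt := hT.exists_mapClusterPt_oppPoly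
  eventually_apply_succ := (eventually_ge_atTop N).mono fun _ hn => hT.tauFun_oppPoly_succ hn
  continuousAt _ hc := continuousAt_tauFun (hT.apply_one_ne_zero_of_mem_OmegaP hc)

end Tame

/-- If `Ω(P)` has an isolated point which is `τ_Ω`-periodic, then `Ω(P)` is finite
    and, with `h = #Ω(P)`, each congruence-class subsequence of opposite polynomials
    converges; the resulting map `ℤ/hℤ → Ω(P)` is a bijection intertwining
    `e ↦ e - 1` with `τ_Ω`. -/
theorem omega_finite_rational (γ : ℕ → ℂ) (u v : ℝ) (N : ℕ) (h : Tame γ u v N)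
    (a : ℕ → ℂ) (ha : a ∈ OmegaP γ)
    (hiso : ∃ V : Set (ℕ → ℂ), V ∈ nhds a ∧ OmegaP γ ∩ V = {a})
    (hper : ∃ p : ℕ, 0 < p ∧ tauFun^[p] a = a) :
    (OmegaP γ).Finite ∧
    ∃ b : ZMod (Nat.card (OmegaP γ)) → (ℕ → ℂ),
      Function.Injective b ∧ Set.range b = OmegaP γ ∧
      (∀ e : ZMod (Nat.card (OmegaP γ)),
        Tendsto (fun m => oppPoly γ (e.val + Nat.card (OmegaP γ) * m)) atTop (nhds (b e))) ∧
      (∀ e : ZMod (Nat.card (OmegaP γ)), tauFun (b e) = b (e - 1)) := by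
  obtain ⟨V, hV, hVa⟩ := hiso
  obtain ⟨p, hp, hpa⟩ := hper
  have hT := h.isBackShift
  have : NeZero (minimalPeriod tauFun a) := ⟨(IsPeriodicPt.minimalPeriod_pos hp hpa).ne'⟩
  obtain ⟨r, hr⟩ := hT.exists_tendsto_residue ha hV hVa.subset iterate_minimalPeriod
  have hΩ : OmegaP γ = range (orbitZMod tauFun a) := hT.clusterPts_eq_range_orbitZMod ha hr
  have hcard : Nat.card (OmegaP γ) = minimalPeriod tauFun a := by
    rw [hΩ, Nat.card_range_of_injective (orbitZMod_injective _ _), Nat.card_zmod]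
  refine ⟨hΩ ▸ finite_range _, ?_⟩
  rw [hcard]
  refine ⟨fun e => orbitZMod tauFun a (r - e), (orbitZMod_injective _ _).comp
    sub_right_injective, ?_, hT.tendsto_orbitZMod ha hr, fun e => ?_⟩
  · rw [hΩ, ← (Equiv.subLeft r).surjective.range_comp (orbitZMod tauFun a)]
    rfl
  · rw [← orbitZMod_add_one tauFun a]
    congr 1
    ring
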